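/- Suppose O_t is conditionally independent of H_{t-1} given (H_t, O_{1:t-1}). Then Pr(H_t = h | H_{t-1}, O_{1:t}) = [Pr(H_t = h | O_{1:t}) / Pr(H_t = h | O_{1:t-1})] · Pr(H_t = h | H_{t-1}, O_{1:t-1}) · [Pr(O_t | O_{1:t-1}) / Pr(O_t | H_{t-1}, O_{1:t-1})]. -/

import Mathlib

open Finset
open scoped Classical

noncomputable def Pr {Ω : Type*} [Fintype Ω] (p : Ω → ℝ) (A : Finset Ω) : ℝ :=
  ∑ ω ∈ A, p ω

noncomputable def cPr {Ω : Type*} [Fintype Ω] (p : Ω → ℝ) (A B : Finset Ω) : ℝ :=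
  Pr p (A ∩ B) / Pr p B

noncomputable def ev {Ω α : Type*} [Fintype Ω] (X : Ω → α) (x : α) : Finset Ω :=
  Finset.univ.filter (fun ω => X ω = x)

noncomputable def evSeq {Ω α : Type*} [Fintype Ω] (X : ℕ → Ω → α) (x : ℕ → α) (a b : ℕ) :
    Finset Ω :=
  (Finset.Icc a b).inf (fun u => ev (X u) (x u))

/- Bayes' rule applied twice. Conditioning on H_{t-1} as well, Bayes gives
Pr(h | h', O_{1:t}) = Pr(O_t | h, h', O_{1:t-1}) Pr(h | h', O_{1:t-1}) / Pr(O_t | h', O_{1:t-1}).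
Conditional independence drops h' from the first factor, and Bayes once more turns
Pr(O_t | h, O_{1:t-1}) into Pr(h | O_{1:t}) Pr(O_t | O_{1:t-1}) / Pr(h | O_{1:t-1}). -/

lemma evSeq_add_one {Ω α : Type*} [Fintype Ω] (X : ℕ → Ω → α) (x : ℕ → α) {a b : ℕ}
    (hab : a ≤ b + 1) :
    evSeq X x a (b + 1) = evSeq X x a b ∩ ev (X (b + 1)) (x (b + 1)) := by
  rw [evSeq, ← Finset.insert_Icc_right_eq_Icc_add_one hab, Finset.inf_insert, inter_comm]
  rfl

lemma Pr_mono {Ω : Type*} [Fintype Ω] {p : Ω → ℝ} (hp : ∀ ω, 0 ≤ p ω) {A B : Finset Ω}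
    (hAB : A ⊆ B) : Pr p A ≤ Pr p B :=
  Finset.sum_le_sum_of_subset_of_nonneg hAB fun ω _ _ => hp ω

lemma cPr_inter_eq_cPr_mul_cPr_div {Ω : Type*} [Fintype Ω] (p : Ω → ℝ) {A B D : Finset Ω}
    (hAB : Pr p (A ∩ B) ≠ 0) (hB : Pr p B ≠ 0) :
    cPr p A (B ∩ D) = cPr p D (A ∩ B) * cPr p A B / cPr p D B := by
  have hABD : A ∩ (B ∩ D) = D ∩ (A ∩ B) := by rw [inter_comm D, inter_assoc]
  unfold cPr
  rw [hABD, inter_comm B D]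
  field_simp

theorem transition_posterior_rewrite_general
    {Ω S V : Type*} [Fintype Ω] (p : Ω → ℝ)
    (hp : ∀ ω, 0 ≤ p ω)
    (t : ℕ) (ht : 1 ≤ t)
    (Hcur Hprev : Ω → S) (O : ℕ → Ω → V) (h h' : S) (o : ℕ → V)
    (hpos2 : 0 < Pr p (ev Hprev h' ∩ evSeq O o 1 (t - 1)))
    (hpos3 : 0 < Pr p (ev Hcur h ∩ ev Hprev h' ∩ evSeq O o 1 (t - 1)))
    (hpos5 : 0 < Pr p (evSeq O o 1 t))
    -- O_t ⟂ H_{t-1} ∣ (H_t, O_{1:t-1}):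
    (hCI : ∀ x : S, ∀ y : S,
      cPr p (ev (O t) (o t)) (ev Hcur x ∩ ev Hprev y ∩ evSeq O o 1 (t - 1)) =
        cPr p (ev (O t) (o t)) (ev Hcur x ∩ evSeq O o 1 (t - 1))) :
    cPr p (ev Hcur h) (ev Hprev h' ∩ evSeq O o 1 t) =
      cPr p (ev Hcur h) (evSeq O o 1 t) / cPr p (ev Hcur h) (evSeq O o 1 (t - 1)) *
        cPr p (ev Hcur h) (ev Hprev h' ∩ evSeq O o 1 (t - 1)) *
        (cPr p (ev (O t) (o t)) (evSeq O o 1 (t - 1)) /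
          cPr p (ev (O t) (o t)) (ev Hprev h' ∩ evSeq O o 1 (t - 1))) := by
  obtain ⟨s, rfl⟩ : ∃ s, t = s + 1 := ⟨t - 1, by omega⟩
  set A := ev Hcur h
  set B := ev Hprev h'
  set C := evSeq O o 1 (s + 1 - 1)
  set D := ev (O (s + 1)) (o (s + 1))
  have hsplit : evSeq O o 1 (s + 1) = C ∩ D := evSeq_add_one O o (by omega)
  have hC : Pr p C ≠ 0 := (hpos2.trans_le (Pr_mono hp inter_subset_right)).ne'
  have hDC : Pr p (D ∩ C) ≠ 0 := by rw [inter_comm, ← hsplit]; exact hpos5.ne'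
  have hobs : cPr p D (A ∩ C) = cPr p A (C ∩ D) * cPr p D C / cPr p A C := by
    rw [inter_comm A, cPr_inter_eq_cPr_mul_cPr_div p hDC hC, inter_comm D]
  rw [hsplit, ← inter_assoc,
    cPr_inter_eq_cPr_mul_cPr_div p (inter_assoc A B C ▸ hpos3.ne') hpos2.ne',
    ← inter_assoc, hCI, hobs]
  ring

/-- rewriting the transition posterior via conditional independence. -/
theorem transition_posterior_rewrite
    {Ω S V : Type*} [Fintype Ω] (p : Ω → ℝ)
    (hp : ∀ ω, 0 ≤ p ω) (hsum : ∑ ω, p ω = 1)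
    (t : ℕ) (ht : 1 ≤ t)
    (Hcur Hprev : Ω → S) (O : ℕ → Ω → V) (h h' : S) (o : ℕ → V)
    (hpos1 : 0 < Pr p (ev Hprev h' ∩ evSeq O o 1 t))
    (hpos2 : 0 < Pr p (ev Hprev h' ∩ evSeq O o 1 (t - 1)))
    (hpos3 : 0 < Pr p (ev Hcur h ∩ ev Hprev h' ∩ evSeq O o 1 (t - 1)))
    (hpos4 : 0 < Pr p (ev Hcur h ∩ evSeq O o 1 (t - 1)))
    (hpos5 : 0 < Pr p (evSeq O o 1 t))
    (hpos6 : 0 < cPr p (ev (O t) (o t)) (ev Hprev h' ∩ evSeq O o 1 (t - 1)))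
    -- O_t ⟂ H_{t-1} ∣ (H_t, O_{1:t-1}):
    (hCI : ∀ x : S, ∀ y : S,
      cPr p (ev (O t) (o t)) (ev Hcur x ∩ ev Hprev y ∩ evSeq O o 1 (t - 1)) =
        cPr p (ev (O t) (o t)) (ev Hcur x ∩ evSeq O o 1 (t - 1))) :
    cPr p (ev Hcur h) (ev Hprev h' ∩ evSeq O o 1 t) =
      cPr p (ev Hcur h) (evSeq O o 1 t) / cPr p (ev Hcur h) (evSeq O o 1 (t - 1)) *
        cPr p (ev Hcur h) (ev Hprev h' ∩ evSeq O o 1 (t - 1)) *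
        (cPr p (ev (O t) (o t)) (evSeq O o 1 (t - 1)) /
          cPr p (ev (O t) (o t)) (ev Hprev h' ∩ evSeq O o 1 (t - 1))) :=
  transition_posterior_rewrite_general p hp t ht Hcur Hprev O h h' o hpos2 hpos3 hpos5 hCI
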